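/- arXiv:2302.02390 — 7 statements merged into one kernel-verified Lean document; each statement's English description precedes it below -/
import Mathlib

section
/- For any real number y and any positive integer k, the inequality {y}(1 - {y}) ≤ k · {y/k}(1 - {y/k}) holds, where {x} = x - ⌊x⌋ denotes the fractional part of x. -/
/-!
Write `y = k n + x` with `n = ⌊y / k⌋` and `x = k {y / k} ∈ [0, k)`, so that `{y} = {x}` and the
right-hand side is `x (k - x) / k`. With `m = ⌊x⌋ ∈ [0, k - 1]` and `u = {x}`, the difference
`(m + u)(k - m - u) - k u (1 - u)` equals `m (k - 1 - m) + m (1 - u)² + (k - 1 - m) u²`.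
-/

lemma mul_mul_one_sub_le_mul_sub {k m : ℝ} (u : ℝ) (hm : 0 ≤ m) (hmk : m ≤ k - 1) :
    k * (u * (1 - u)) ≤ (m + u) * (k - (m + u)) := by
  have hkm : 0 ≤ k - 1 - m := by linarith
  nlinarith [mul_nonneg hm hkm, mul_nonneg hm (sq_nonneg (1 - u)), mul_nonneg hkm (sq_nonneg u)]

namespace Int

lemma mul_fract_mul_one_sub_fract_le {x : ℝ} {k : ℕ} (hx : 0 ≤ x) (hxk : x < k) :
    k * (fract x * (1 - fract x)) ≤ x * (k - x) := by
  have hm : (0 : ℝ) ≤ ⌊x⌋ := mod_cast floor_nonneg.2 hx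
  have hmk : ⌊x⌋ ≤ (k : ℤ) - 1 := Int.le_sub_one_of_lt (floor_lt.2 (mod_cast hxk))
  have := mul_mul_one_sub_le_mul_sub (k := k) (fract x) hm (mod_cast hmk)
  rwa [floor_add_fract] at this

lemma fract_mul_fract_div {k : ℤ} (hk : k ≠ 0) (y : ℝ) : fract (k * fract (y / k)) = fract y := by
  have hy : y = k * fract (y / k) + ((k * ⌊y / k⌋ : ℤ) : ℝ) := by
    push_cast
    rw [← mul_add, add_comm, floor_add_fract, mul_div_cancel₀ _ (mod_cast hk)]
  conv_rhs => rw [hy, fract_add_intCast]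

end Int

/-- For any real `y` and positive integer `k`,
`{y}(1 - {y}) ≤ k · {y/k}(1 - {y/k})`, where `{x}` is the fractional part. -/
theorem fract_mul_one_sub_le (y : ℝ) (k : ℕ) (hk : 0 < k) :
    Int.fract y * (1 - Int.fract y) ≤
      (k : ℝ) * (Int.fract (y / (k : ℝ)) * (1 - Int.fract (y / (k : ℝ)))) := by
  set f := Int.fract (y / k)
  have hk' : (0 : ℝ) < k := mod_cast hk
  have hfy : Int.fract (k * f) = Int.fract y :=
    mod_cast Int.fract_mul_fract_div (k := k) (by omega) y
  have key := Int.mul_fract_mul_one_sub_fract_le (x := k * f) (k := k)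
    (mul_nonneg hk'.le (Int.fract_nonneg _))
    (mul_lt_of_lt_one_right hk' (Int.fract_lt_one _))
  rw [hfy] at key
  refine le_of_mul_le_mul_left (key.trans_eq ?_) hk'
  ring
end

section
/- For any real z with 0 ≤ z < 1, the expectation over u uniformly distributed on [-1/2, 1/2) of (⌊z + u⌉ - z)² equals z(1 - z). Equivalently, ∫_{-1/2}^{1/2} (⌊z+u⌉ - z)² du = z(1 - z). -/
/-! On `[-1/2, 1/2)` the shift `z + u` rounds to `0` for `u < 1/2 - z` and to `1` afterwards,
so the integrand is `z²` on an interval of length `1 - z` and `(1 - z)²` on one of length `z`;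
hence the integral is `(1 - z) z² + z (1 - z)² = z (1 - z)`. -/

open MeasureTheory Set

theorem setIntegral_Ico_eq_of_eqOn_const_of_eqOn_const {E : Type*} [NormedAddCommGroup E]
    [NormedSpace ℝ E] [CompleteSpace E] {f : ℝ → E} {a b c : ℝ} {x y : E}
    (hab : a ≤ b) (hbc : b ≤ c)
    (hx : EqOn f (fun _ ↦ x) (Ico a b)) (hy : EqOn f (fun _ ↦ y) (Ico b c)) :
    ∫ u in Ico a c, f u = (b - a) • x + (c - b) • y := by
  have hfx : IntegrableOn f (Ico a b) :=
    (integrableOn_const measure_Ico_lt_top.ne).congr_fun hx.symm measurableSet_Ico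
  have hfy : IntegrableOn f (Ico b c) :=
    (integrableOn_const measure_Ico_lt_top.ne).congr_fun hy.symm measurableSet_Ico
  rw [← Ico_union_Ico_eq_Ico hab hbc,
    setIntegral_union Ico_disjoint_Ico_same measurableSet_Ico hfx hfy,
    setIntegral_congr_fun measurableSet_Ico hx, setIntegral_congr_fun measurableSet_Ico hy,
    setIntegral_const, setIntegral_const, Real.volume_real_Ico_of_le hab,
    Real.volume_real_Ico_of_le hbc]

/-- For `0 ≤ z < 1`, the expectation over `u` uniform on `[-1/2, 1/2)` of
`(⌊z + u⌉ - z)²` equals `z(1 - z)`. -/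
theorem integral_round_shift_sq (z : ℝ) (hz0 : 0 ≤ z) (hz1 : z < 1) :
    ∫ u in Set.Ico (-(1:ℝ)/2) (1/2), (((round (z + u) : ℤ) : ℝ) - z) ^ 2 = z * (1 - z) := by
  have below : EqOn (fun u ↦ (((round (z + u) : ℤ) : ℝ) - z) ^ 2) (fun _ ↦ z ^ 2)
      (Ico (-(1:ℝ)/2) (1/2 - z)) := fun u hu ↦ by
    have hround : round (z + u) = 0 :=
      round_eq_zero_iff.2 ⟨by linarith [hu.1], by linarith [hu.2]⟩
    simp [hround]
  have above : EqOn (fun u ↦ (((round (z + u) : ℤ) : ℝ) - z) ^ 2) (fun _ ↦ (1 - z) ^ 2)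
      (Ico (1/2 - z) (1/2)) := fun u hu ↦ by
    have hround : round (z + u) = 1 := by
      rw [round_eq_iff]
      push_cast
      exact ⟨by linarith [hu.1], by linarith [hu.2]⟩
    simp [hround]
  rw [setIntegral_Ico_eq_of_eqOn_const_of_eqOn_const (by linarith) (by linarith) below above,
    smul_eq_mul, smul_eq_mul]
  ring
end

section
/- Let δ > 0, x ∈ ℝ, and r ∼ Unif([-δ/2, δ/2)). Define Q_{r,δ}(x) = δ·⌊(x - r)/δ⌉ + r. Then the probability that Q_{r,δ}(x) - r = 0 equals max(0, 1 - |x/δ|). Consequently, for a vector v ∈ ℝⁿ (quantized coordinate-wise with the same shift r applied to each coordinate independently in distribution), E[‖Q_{r,δ}(v) - r·1‖₀] ≤ ‖v‖₁/δ. -/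
/-!
`δ ⌊(x - r)/δ⌉` vanishes exactly when `r ∈ (x - δ/2, x + δ/2]`, so the probability of a zero is
the overlap of two intervals of length `δ` offset by `|x|`, that is `(δ - |x|)⁺ / δ`. The
complementary probability is then at most `|x| / δ`, and linearity of expectation over the
coordinates gives the bound on the expected number of nonzero entries.
-/

open MeasureTheory Set

lemma mul_round_sub_div_eq_zero_iff {δ : ℝ} (hδ : 0 < δ) (x r : ℝ) :
    δ * ((round ((x - r) / δ) : ℤ) : ℝ) = 0 ↔ r ∈ Ioc (x - δ / 2) (x + δ / 2) := by
  rw [mul_eq_zero, or_iff_right hδ.ne', Int.cast_eq_zero, round_eq_zero_iff, mem_Ico, mem_Ioc,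
    le_div_iff₀ hδ, div_lt_iff₀ hδ]
  constructor <;> rintro ⟨h₁, h₂⟩ <;> constructor <;> linarith

lemma volume_Ico_inter_Ioc (a b c d : ℝ) :
    volume (Ico a b ∩ Ioc c d) = ENNReal.ofReal (min b d - max a c) := by
  refine le_antisymm ?_ ?_
  · calc volume (Ico a b ∩ Ioc c d) ≤ volume (Icc (max a c) (min b d)) :=
          measure_mono fun r ⟨⟨h₁, h₂⟩, h₃, h₄⟩ => ⟨max_le h₁ h₃.le, le_min h₂.le h₄⟩
      _ = _ := Real.volume_Icc
  · calc ENNReal.ofReal (min b d - max a c) = volume (Ioo (max a c) (min b d)) :=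
          Real.volume_Ioo.symm
      _ ≤ _ := measure_mono fun r ⟨h₁, h₂⟩ => by
          rw [max_lt_iff] at h₁
          rw [lt_min_iff] at h₂
          exact ⟨⟨h₁.1.le, h₂.1⟩, h₁.2, h₂.2.le⟩

lemma measureReal_Ico_inter_Ioc_centered (δ x : ℝ) :
    volume.real (Ico (-δ / 2) (δ / 2) ∩ Ioc (x - δ / 2) (x + δ / 2)) = max (δ - |x|) 0 := by
  rw [measureReal_def, volume_Ico_inter_Ioc, ENNReal.toReal_ofReal']
  congr 1
  rcases le_total x 0 with hx | hx
  · rw [abs_of_nonpos hx, min_eq_right (by linarith), max_eq_left (by linarith)]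
    ring
  · rw [abs_of_nonneg hx, min_eq_left (by linarith), max_eq_right (by linarith)]
    ring

lemma integral_Ico_indicator_compl_Ioc_centered (δ x : ℝ) :
    ∫ r in Ico (-δ / 2) (δ / 2), (Ioc (x - δ / 2) (x + δ / 2))ᶜ.indicator 1 r ≤ |x| := by
  -- the window and its complement share the mass of `Ico`, so the integral is `δ⁺ - (δ - |x|)⁺`
  have hsplit := measureReal_add_measureReal_compl (μ := volume.restrict (Ico (-δ / 2) (δ / 2)))
    (measurableSet_Ioc (a := x - δ / 2) (b := x + δ / 2))
  rw [measureReal_restrict_apply measurableSet_Ioc, inter_comm,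
    measureReal_Ico_inter_Ioc_centered, measureReal_restrict_apply_univ, Real.volume_real_Ico,
    ← integral_indicator_one measurableSet_Ioc.compl] at hsplit
  have hmax : max (δ / 2 - -δ / 2) 0 ≤ max (δ - |x|) 0 + |x| :=
    max_le (by linarith [le_max_left (δ - |x|) 0]) (add_nonneg (le_max_right _ _) (abs_nonneg x))
  linarith

/-- For `r` uniform on `[-δ/2, δ/2)` and `Q_{r,δ}(x) = δ⌊(x-r)/δ⌉ + r`:
(1) the probability that `Q_{r,δ}(x) - r = 0` equals `max 0 (1 - |x/δ|)`;
(2) for a vector `v ∈ ℝⁿ` quantized coordinate-wise with the single shift `r`,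
the expected number of coordinates with `Q_{r,δ}(v_i) - r ≠ 0` is at most `‖v‖₁/δ`. -/
theorem randomShiftQuant_sparsity (δ : ℝ) (hδ : 0 < δ) :
    (∀ x : ℝ,
      (volume {r ∈ Set.Ico (-δ/2) (δ/2) |
          δ * ((round ((x - r) / δ) : ℤ) : ℝ) = 0}).toReal / δ
        = max 0 (1 - |x / δ|)) ∧
    (∀ (n : ℕ) (v : Fin n → ℝ),
      (1 / δ) * ∫ r in Set.Ico (-δ/2) (δ/2),
          ((Finset.univ.filter
            (fun i : Fin n => δ * ((round ((v i - r) / δ) : ℤ) : ℝ) ≠ 0)).card : ℝ)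
        ≤ (∑ i, |v i|) / δ) := by
  have hzero (x : ℝ) : {r ∈ Ico (-δ/2) (δ/2) | δ * ((round ((x - r) / δ) : ℤ) : ℝ) = 0} =
      Ico (-δ / 2) (δ / 2) ∩ Ioc (x - δ / 2) (x + δ / 2) := by
    ext r; exact and_congr_right_iff.mpr fun _ => mul_round_sub_div_eq_zero_iff hδ x r
  refine ⟨fun x => ?_, fun n v => ?_⟩
  · rw [hzero, ← measureReal_def, measureReal_Ico_inter_Ioc_centered, ← max_div_div_right hδ.le,
      sub_div, div_self hδ.ne', zero_div, abs_div, abs_of_pos hδ, max_comm]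
  · have hcount (r : ℝ) : ((Finset.univ.filter
        (fun i : Fin n => δ * ((round ((v i - r) / δ) : ℤ) : ℝ) ≠ 0)).card : ℝ) =
        ∑ i, (Ioc (v i - δ / 2) (v i + δ / 2))ᶜ.indicator 1 r := by
      simp only [Finset.natCast_card_filter, Set.indicator_apply, mem_compl_iff,
        mul_round_sub_div_eq_zero_iff hδ, Pi.one_apply, ne_eq]
    simp_rw [hcount]
    rw [integral_finsetSum _ fun i _ => (integrable_const 1).indicator measurableSet_Ioc.compl,
      one_div, inv_mul_eq_div]
    gcongr with i
    exact integral_Ico_indicator_compl_Ioc_centered δ (v i)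
end

section
/- Let δ* > δ > 0 with δ*/δ an integer k. For any real x, δ²·{x/δ}(1 - {x/δ}) ≤ (δ/δ*)·(δ*)²·{x/δ*}(1 - {x/δ*}). Equivalently, the variance of quantization by random shift at resolution δ is at most (δ/δ*) times the variance at the coarser resolution δ*. -/
lemma core_ineq (k m s : ℝ) (hk : 2 ≤ k) (hm0 : 0 ≤ m) (hm1 : m ≤ k - 1)
    (hs0 : 0 ≤ s) (hs1 : s ≤ 1) :
    k * (s * (1 - s)) ≤ (m + s) * (k - (m + s)) := by
  nlinarith [mul_nonneg (mul_nonneg (sub_nonneg.2 hm1) hs0) hs0,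
    mul_nonneg (mul_nonneg hm0 (sub_nonneg.2 hs1)) (sub_nonneg.2 hs1),
    mul_nonneg hm0 (sub_nonneg.2 hm1)]

/-- Variance comparison across resolutions: if `δ* > δ > 0` with `δ*/δ ∈ ℤ`, then for any `x`,
`δ²·{x/δ}(1 - {x/δ}) ≤ (δ/δ*)·(δ*)²·{x/δ*}(1 - {x/δ*})`. -/
theorem variance_resolution_compare (δ δs x : ℝ) (hδ : 0 < δ) (hδs : δ < δs)
    (hint : ∃ k : ℤ, δs / δ = (k : ℝ)) :
    δ ^ 2 * (Int.fract (x / δ) * (1 - Int.fract (x / δ)))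
      ≤ (δ / δs) * (δs ^ 2 * (Int.fract (x / δs) * (1 - Int.fract (x / δs)))) := by
  obtain ⟨k, hk⟩ := hint
  have hδ0 : δ ≠ 0 := ne_of_gt hδ
  have hδs0 : (0:ℝ) < δs := lt_trans hδ hδs
  have hδsk : δs = (k : ℝ) * δ := by field_simp at hk; linarith [hk]
  have hk1 : (1:ℝ) < (k:ℝ) := by
    rw [← hk]; rw [lt_div_iff₀ hδ]; linarith
  have hk2 : (2:ℤ) ≤ k := by
    have : (1:ℤ) < k := by exact_mod_cast hk1
    omega
  have hk2' : (2:ℝ) ≤ (k:ℝ) := by exact_mod_cast hk2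
  set u := x / δs with hu
  set t := Int.fract u with ht
  -- x / δ = k * u
  have hxδ : x / δ = (k:ℝ) * u := by
    rw [hu, hδsk]; field_simp
  -- fract (k*u) = fract (k*t)
  have hfr : Int.fract (x / δ) = Int.fract ((k:ℝ) * t) := by
    rw [hxδ, ht]
    have h : (k:ℝ) * u = (k:ℝ) * Int.fract u + (k * ⌊u⌋ : ℤ) := by
      push_cast
      rw [Int.fract]
      ring
    rw [h, Int.fract_add_intCast]
  set s := Int.fract ((k:ℝ) * t) with hs
  set m := ⌊(k:ℝ) * t⌋ with hm
  have hms : (k:ℝ) * t = (m:ℝ) + s := by rw [hs, Int.fract]; ring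
  have ht0 : 0 ≤ t := Int.fract_nonneg u
  have ht1 : t < 1 := Int.fract_lt_one u
  have hs0 : 0 ≤ s := Int.fract_nonneg _
  have hs1 : s < 1 := Int.fract_lt_one _
  have hm0 : (0:ℝ) ≤ (m:ℝ) := by
    have : (0:ℝ) ≤ (k:ℝ) * t := mul_nonneg (by linarith) ht0
    exact_mod_cast Int.le_floor.2 (by exact_mod_cast this)
  have hm1 : (m:ℝ) ≤ (k:ℝ) - 1 := by
    have h1 : (m:ℝ) ≤ (k:ℝ) * t := Int.floor_le _
    have h2 : (k:ℝ) * t < (k:ℝ) := by nlinarith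
    have : m < k := by exact_mod_cast lt_of_le_of_lt h1 h2
    have : m ≤ k - 1 := by omega
    push_cast
    exact_mod_cast this
  have key : (k:ℝ) * (s * (1 - s)) ≤ ((m:ℝ) + s) * ((k:ℝ) - ((m:ℝ) + s)) :=
    core_ineq _ _ _ hk2' hm0 hm1 hs0 (le_of_lt hs1)
  -- goal : δ^2 * (s*(1-s)) ≤ (δ/δs) * (δs^2 * (t*(1-t)))
  rw [hfr]
  have hrhs : (δ / δs) * (δs ^ 2 * (t * (1 - t))) = δ ^ 2 * ((k:ℝ) * t * (1 - t)) := by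
    rw [hδsk]; field_simp
  rw [hrhs]
  have : (k:ℝ) * t * (1 - t) = ((m:ℝ) + s) * ((k:ℝ) - ((m:ℝ) + s)) / (k:ℝ) := by
    rw [← hms]; field_simp
  rw [this]
  have hδ2 : (0:ℝ) ≤ δ ^ 2 := sq_nonneg δ
  apply mul_le_mul_of_nonneg_left _ hδ2
  rw [le_div_iff₀ (by linarith : (0:ℝ) < (k:ℝ))]
  linarith [key]
end

section
/- Let δ* > δ > 0 with δ*/δ ∈ ℤ. Let x ∈ ℝⁿ, and for each r ∈ [-δ*/2, δ*/2), let x*_{r} be an arbitrary point of the shifted lattice δ*ℤⁿ + r·1. Let Q_δ be the quantization-by-random-shift operator at resolution δ (with shift r' ∼ Unif([-δ/2, δ/2)) applied to all coordinates using a single random scalar). Then E[‖Q_δ(x) - x‖₂²] ≤ (δ/δ*) · E_{r ∼ Unif([-δ*/2, δ*/2))}[‖x*_{r} - x‖₂²]. -/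
/-!
In each coordinate the error of `Q_δ` is the rounding error of `x i - r'` to `δℤ`, a `δ`-periodic
sawtooth whose square has mean `δ² / 12` over a period, so the left side equals `n δ² / 12`.
Each coordinate of `xs r` lies in `δ*ℤ + r`, hence is no closer to `x i` than the nearest point of
that coset; averaging over `r` bounds the right side below by `(δ / δ*) · n δ*² / 12 ≥ n δ² / 12`.
-/

open MeasureTheory

noncomputable def roundErr (δ t : ℝ) : ℝ := δ * round (t / δ) - t

lemma roundErr_eq_mul (δ t : ℝ) (hδ : δ ≠ 0) : roundErr δ t = δ * (round (t / δ) - t / δ) := by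
  rw [roundErr]; field_simp

lemma abs_roundErr_le {δ : ℝ} (hδ : δ ≠ 0) (t : ℝ) : |roundErr δ t| ≤ |δ| / 2 := by
  rw [roundErr_eq_mul δ t hδ, abs_mul, abs_sub_comm]
  linarith [mul_le_mul_of_nonneg_left (abs_sub_round (t / δ)) (abs_nonneg δ)]

lemma roundErr_sq_le (δ t : ℝ) (k : ℤ) : roundErr δ t ^ 2 ≤ (δ * k - t) ^ 2 := by
  rcases eq_or_ne δ 0 with rfl | hδ
  · simp [roundErr]
  have hk : δ * k - t = δ * (k - t / δ) := by field_simp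
  rw [roundErr_eq_mul δ t hδ, hk, ← sq_abs, ← sq_abs (δ * _), abs_mul, abs_mul,
    abs_sub_comm, abs_sub_comm (k : ℝ)]
  exact pow_le_pow_left₀ (by positivity)
    (mul_le_mul_of_nonneg_left (round_le (t / δ) k) (abs_nonneg δ)) 2

lemma measurable_roundErr (δ : ℝ) : Measurable (roundErr δ) := by
  unfold roundErr
  simp only [round_eq]
  fun_prop

lemma roundErr_periodic {δ : ℝ} (hδ : δ ≠ 0) : Function.Periodic (roundErr δ) δ := by
  intro t
  simp only [roundErr, add_div, div_self hδ, round_add_one]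
  push_cast
  ring

lemma roundErr_sq_eq_sq {δ t : ℝ} (hδ : 0 < δ) (ht : t ∈ Set.Icc (-δ / 2) (δ / 2)) :
    roundErr δ t ^ 2 = t ^ 2 := by
  rcases eq_or_lt_of_le ht.2 with rfl | hlt
  · have : round ((δ / 2) / δ) = 1 := by
      rw [div_div_cancel_left' hδ.ne', round_eq]; norm_num
    rw [roundErr, this]; ring
  · have : round (t / δ) = 0 := by
      rw [round_eq_zero_iff]
      constructor
      · rw [le_div_iff₀ hδ]; linarith [ht.1]
      · rw [div_lt_iff₀ hδ]; linarith
    simp [roundErr, this]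

lemma integral_roundErr_sq {δ : ℝ} (hδ : 0 < δ) (a : ℝ) :
    ∫ t in a..a + δ, roundErr δ t ^ 2 = δ ^ 3 / 12 := by
  have hper : Function.Periodic (fun t => roundErr δ t ^ 2) δ := fun t => by
    simp only [roundErr_periodic hδ.ne' t]
  rw [hper.intervalIntegral_add_eq a (-δ / 2), show -δ / 2 + δ = δ / 2 by ring,
    intervalIntegral.integral_congr (g := fun t => t ^ 2) fun t ht =>
      roundErr_sq_eq_sq hδ (by rwa [Set.uIcc_of_le (by linarith)] at ht),
    integral_pow]
  ring

lemma integrableOn_roundErr_sq_sub {δ : ℝ} (hδ : δ ≠ 0) (a : ℝ) {s : Set ℝ} (hs : volume s ≠ ⊤) :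
    IntegrableOn (fun r => roundErr δ (a - r) ^ 2) s := by
  refine Measure.integrableOn_of_bounded (M := (|δ| / 2) ^ 2) hs
    (((measurable_roundErr δ).comp (measurable_const.sub measurable_id)).pow_const 2).aestronglyMeasurable
    (Filter.Eventually.of_forall fun r => ?_)
  rw [Real.norm_eq_abs, abs_pow]
  gcongr
  exact abs_roundErr_le hδ (a - r)

lemma setIntegral_roundErr_sq_sub {δ : ℝ} (hδ : 0 < δ) (a : ℝ) :
    ∫ r in Set.Ico (-δ / 2) (δ / 2), roundErr δ (a - r) ^ 2 = δ ^ 3 / 12 := by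
  rw [restrict_Ico_eq_restrict_Ioc, ← intervalIntegral.integral_of_le (by linarith),
    intervalIntegral.integral_comp_sub_left (fun t => roundErr δ t ^ 2),
    show a - -δ / 2 = a - δ / 2 + δ by ring, integral_roundErr_sq hδ]

lemma setIntegral_sum_roundErr_sq_sub {ι : Type*} [Fintype ι] {δ : ℝ} (hδ : 0 < δ) (x : ι → ℝ) :
    ∫ r in Set.Ico (-δ / 2) (δ / 2), ∑ i, roundErr δ (x i - r) ^ 2
      = Fintype.card ι * (δ ^ 3 / 12) := by
  rw [integral_finsetSum _ fun i _ => integrableOn_roundErr_sq_sub hδ.ne' (x i) measure_Ico_lt_top.ne]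
  simp [setIntegral_roundErr_sq_sub hδ]

lemma card_mul_le_setIntegral_sum_sq_sub {ι : Type*} [Fintype ι] {δ : ℝ} (hδ : 0 < δ)
    (x : ι → ℝ) (xs : ℝ → ι → ℝ)
    (hlattice : ∀ r ∈ Set.Ico (-δ / 2) (δ / 2), ∀ i, ∃ k : ℤ, xs r i = δ * k + r)
    (hintegrable : IntegrableOn (fun r => ∑ i, (xs r i - x i) ^ 2) (Set.Ico (-δ / 2) (δ / 2))) :
    Fintype.card ι * (δ ^ 3 / 12) ≤ ∫ r in Set.Ico (-δ / 2) (δ / 2), ∑ i, (xs r i - x i) ^ 2 := by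
  rw [← setIntegral_sum_roundErr_sq_sub hδ x]
  refine setIntegral_mono_on (integrable_finsetSum _ fun i _ =>
    integrableOn_roundErr_sq_sub hδ.ne' (x i) measure_Ico_lt_top.ne) hintegrable measurableSet_Ico
    fun r hr => Finset.sum_le_sum fun i _ => ?_
  obtain ⟨k, hk⟩ := hlattice r hr i
  rw [hk, show δ * k + r - x i = δ * k - (x i - r) by ring]
  exact roundErr_sq_le δ (x i - r) k

theorem quant_err_le_opt_rel_shift_general (n : ℕ) (δ δs : ℝ) (hδ : 0 < δ) (hδs : δ < δs)
    (x : Fin n → ℝ) (xs : ℝ → (Fin n → ℝ))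
    (hlattice : ∀ r ∈ Set.Ico (-δs/2) (δs/2), ∀ i, ∃ k : ℤ, xs r i = δs * (k : ℝ) + r)
    (hintegrable : IntegrableOn (fun r => ∑ i, (xs r i - x i) ^ 2)
      (Set.Ico (-δs/2) (δs/2)) volume) :
    (1 / δ) * ∫ r' in Set.Ico (-δ/2) (δ/2),
        ∑ i, (δ * ((round ((x i - r') / δ) : ℤ) : ℝ) + r' - x i) ^ 2
      ≤ (δ / δs) * ((1 / δs) * ∫ r in Set.Ico (-δs/2) (δs/2),
        ∑ i, (xs r i - x i) ^ 2) := by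
  have hδs0 : 0 < δs := hδ.trans hδs
  simp_rw [show ∀ r' i, δ * (round ((x i - r') / δ) : ℝ) + r' - x i = roundErr δ (x i - r') from
    fun _ _ => by rw [roundErr]; ring]
  have hopt := card_mul_le_setIntegral_sum_sq_sub hδs0 x xs hlattice hintegrable
  rw [setIntegral_sum_roundErr_sq_sub hδ x]
  rw [Fintype.card_fin] at hopt ⊢
  calc (1 / δ) * (n * (δ ^ 3 / 12)) = (δ / δs) * ((1 / δs) * (n * (δ * δs ^ 2 / 12))) := by
        field_simp
    _ ≤ (δ / δs) * ((1 / δs) * (n * (δs ^ 3 / 12))) := by gcongr; nlinarith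
    _ ≤ _ := by gcongr

/-- Lemma 4 (key quantization lemma). Let `δ* > δ > 0` with `δ*/δ ∈ ℤ`, `x ∈ ℝⁿ`, and for
each shift `r ∈ [-δ*/2, δ*/2)` let `xs r` be an arbitrary point of the lattice
`δ*ℤⁿ + r·1`. Then the expected squared error of quantization by random shift at
resolution `δ` satisfies
`E‖Q_δ(x) - x‖₂² ≤ (δ/δ*)·E_r‖xs r - x‖₂²`. -/
theorem quant_err_le_opt_rel_shift (n : ℕ) (δ δs : ℝ) (hδ : 0 < δ) (hδs : δ < δs)
    (hint : ∃ k : ℤ, δs / δ = (k : ℝ))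
    (x : Fin n → ℝ) (xs : ℝ → (Fin n → ℝ))
    (hlattice : ∀ r ∈ Set.Ico (-δs/2) (δs/2), ∀ i, ∃ k : ℤ, xs r i = δs * (k : ℝ) + r)
    (hintegrable : IntegrableOn (fun r => ∑ i, (xs r i - x i) ^ 2)
      (Set.Ico (-δs/2) (δs/2)) volume) :
    (1 / δ) * ∫ r' in Set.Ico (-δ/2) (δ/2),
        ∑ i, (δ * ((round ((x i - r') / δ) : ℤ) : ℝ) + r' - x i) ^ 2
      ≤ (δ / δs) * ((1 / δs) * ∫ r in Set.Ico (-δs/2) (δs/2),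
        ∑ i, (xs r i - x i) ^ 2) :=
  quant_err_le_opt_rel_shift_general n δ δs hδ hδs x xs hlattice hintegrable
end

section
/- Let f : ℝⁿ → ℝ be differentiable and satisfy the α-Polyak–Łojasiewicz condition (1/2)‖∇f(x)‖₂² ≥ α(f(x) - f*) for all x, where f* = min f is attained. Then for every x there exists a global minimizer x* of f with f(x) - f* ≥ (α/2)‖x - x*‖₂². -/
/-!
Put `g = √(f - f*)`; where `f > f*`, the PL inequality says `‖∇g‖ ≥ √(α / 2)`. For
`δ < √(α / 2)`, a minimizer `y` of `g + δ‖· - x‖` (it exists by coercivity) cannot have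
`f y > f*`, since there `g` would be differentiable with `‖∇g(y)‖ ≤ δ`. So `y` minimizes `f`, and
comparing with the value at `x` gives `δ‖x - y‖ ≤ g x`. Letting `δ → √(α / 2)` bounds the distance
from `x` to the minimum set, which is attained at a nearest minimizer; squaring gives the claim.
-/

open Filter Topology Set Metric Asymptotics

theorem Continuous.exists_ekeland_of_properSpace {X : Type*} [MetricSpace X] [ProperSpace X]
    {g : X → ℝ} (hg : Continuous g) (hbdd : BddBelow (range g)) {δ : ℝ} (hδ : 0 < δ) (x : X) :
    ∃ y, g y + δ * dist y x ≤ g x ∧ ∀ z, g y ≤ g z + δ * dist z y := by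
  obtain ⟨m, hm⟩ := hbdd
  have hcoercive : Tendsto (fun z => g z + δ * dist z x) (cocompact X) atTop :=
    tendsto_atTop_add_left_of_le _ m (fun z => hm ⟨z, rfl⟩)
      ((tendsto_dist_right_cocompact_atTop x).const_mul_atTop hδ)
  have : Nonempty X := ⟨x⟩
  have hcont : Continuous fun z => g z + δ * dist z x := by fun_prop
  obtain ⟨y, hy⟩ := hcont.exists_forall_le hcoercive
  refine ⟨y, by simpa using hy x, fun z => ?_⟩
  nlinarith [hy z, dist_triangle z y x]

theorem HasFDerivAt.norm_le_of_isLocalMin_add_mul_norm {E : Type*} [NormedAddCommGroup E]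
    [NormedSpace ℝ E] {g : E → ℝ} {g' : StrongDual ℝ E} {y : E} (hg : HasFDerivAt g g' y)
    {K : ℝ} (hK : 0 ≤ K) (hmin : IsLocalMin (fun z => g z + K * ‖z - y‖) y) : ‖g'‖ ≤ K := by
  refine le_of_forall_pos_le_add fun ε hε =>
    ContinuousLinearMap.opNorm_le_of_nhds_zero (by positivity) ?_
  have hmin₀ : ∀ᶠ h in 𝓝 (0 : E), g y ≤ g (y + h) + K * ‖h‖ := by
    rw [IsLocalMin, IsMinFilter, ← map_add_left_nhds_zero y, eventually_map] at hmin
    simpa using hmin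
  have hlower : ∀ᶠ h in 𝓝 (0 : E), -g' h ≤ (K + ε) * ‖h‖ := by
    filter_upwards [isLittleO_iff.1 (hasFDerivAt_iff_isLittleO_nhds_zero.1 hg) hε, hmin₀]
      with h hrem hh
    rw [Real.norm_eq_abs] at hrem
    linarith [le_abs_self (g (y + h) - g y - g' h), add_mul K ε ‖h‖]
  filter_upwards [hlower, (continuous_neg.tendsto' 0 0 neg_zero).eventually hlower]
    with h h₁ h₂
  rw [map_neg, norm_neg, neg_neg] at h₂
  rw [Real.norm_eq_abs, abs_le]
  constructor <;> linarith

section PolyakLojasiewicz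

variable {E : Type*} [NormedAddCommGroup E] [NormedSpace ℝ E] [ProperSpace E]
  {f : E → ℝ} {α : ℝ} {xstar : E}

theorem exists_mem_preimage_mul_dist_le_sqrt_of_pl (hf : Differentiable ℝ f)
    (hmin : ∀ y, f xstar ≤ f y) (hPL : ∀ x, α * (f x - f xstar) ≤ ‖fderiv ℝ f x‖ ^ 2 / 2)
    {δ : ℝ} (hδ : 0 < δ) (hδα : δ < √(α / 2)) (x : E) :
    ∃ y ∈ f ⁻¹' {f xstar}, δ * dist y x ≤ √(f x - f xstar) := by
  set g : E → ℝ := fun z => √(f z - f xstar)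
  have hg_cont : Continuous g := (hf.continuous.sub continuous_const).sqrt
  obtain ⟨y, hyx, hy⟩ := hg_cont.exists_ekeland_of_properSpace
    ⟨0, by rintro _ ⟨z, rfl⟩; exact Real.sqrt_nonneg _⟩ hδ x
  refine ⟨y, ?_, by linarith [Real.sqrt_nonneg (f y - f xstar)]⟩
  by_contra hne
  have hpos : 0 < f y - f xstar := sub_pos.2 ((hmin y).lt_of_ne (Ne.symm hne))
  have hg' : HasFDerivAt g ((1 / (2 * g y)) • fderiv ℝ f y) y :=
    ((hf y).hasFDerivAt.sub_const _).sqrt hpos.ne'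
  have hslope := hg'.norm_le_of_isLocalMin_add_mul_norm hδ.le
    (Eventually.of_forall fun z => by simpa [dist_eq_norm] using hy z)
  have hgy : 0 < g y := Real.sqrt_pos.2 hpos
  have hgy_sq : g y ^ 2 = f y - f xstar := Real.sq_sqrt hpos.le
  rw [norm_smul, Real.norm_eq_abs, abs_of_pos (by positivity), one_div,
    inv_mul_le_iff₀ (by positivity)] at hslope
  have h2δ : 2 * δ ^ 2 < α := by
    have := (Real.lt_sqrt hδ.le).1 hδα
    linarith
  -- the PL inequality says exactly that `‖∇ √(f - f*)‖ ≥ √(α / 2)` where `f > f*`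
  nlinarith [hPL y, pow_le_pow_left₀ (norm_nonneg _) hslope 2]

theorem infDist_mul_le_sqrt_of_pl (hα : 0 < α) (hf : Differentiable ℝ f)
    (hmin : ∀ y, f xstar ≤ f y) (hPL : ∀ x, α * (f x - f xstar) ≤ ‖fderiv ℝ f x‖ ^ 2 / 2)
    (x : E) : infDist x (f ⁻¹' {f xstar}) * √(α / 2) ≤ √(f x - f xstar) := by
  have hδ : ∀ δ ∈ Ioo 0 √(α / 2), infDist x (f ⁻¹' {f xstar}) * δ ≤ √(f x - f xstar) := by
    rintro δ ⟨hδ, hδα⟩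
    obtain ⟨y, hyS, hy⟩ := exists_mem_preimage_mul_dist_le_sqrt_of_pl hf hmin hPL hδ hδα x
    calc infDist x (f ⁻¹' {f xstar}) * δ ≤ dist x y * δ := by
          gcongr; exact infDist_le_dist_of_mem hyS
      _ ≤ √(f x - f xstar) := by rw [dist_comm, mul_comm]; exact hy
  exact le_of_tendsto (((continuous_const_mul _).tendsto _).mono_left nhdsWithin_le_nhds)
    (eventually_of_mem (Ioo_mem_nhdsLT (by positivity)) hδ)

end PolyakLojasiewicz

/-- Quadratic growth from the PL condition: if `f` is differentiable, attains its minimum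
at `xstar`, and satisfies the `α`-PL condition, then for every `x` there is a global
minimizer `xm` with `f(x) - f* ≥ (α/2)‖x - xm‖²`. -/
theorem pl_quadratic_growth (n : ℕ) (α : ℝ) (hα : 0 < α)
    (f : EuclideanSpace ℝ (Fin n) → ℝ) (hdiff : Differentiable ℝ f)
    (xstar : EuclideanSpace ℝ (Fin n)) (hmin : ∀ y, f xstar ≤ f y)
    (hPL : ∀ x, (1 / 2) * ‖gradient f x‖ ^ 2 ≥ α * (f x - f xstar)) :
    ∀ x, ∃ xm : EuclideanSpace ℝ (Fin n),
      (∀ y, f xm ≤ f y) ∧ f x - f xstar ≥ α / 2 * ‖x - xm‖ ^ 2 := by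
  intro x
  have hPL' : ∀ x, α * (f x - f xstar) ≤ ‖fderiv ℝ f x‖ ^ 2 / 2 := fun x => by
    simpa [gradient, div_eq_inv_mul] using hPL x
  have hS : IsClosed (f ⁻¹' {f xstar}) := isClosed_singleton.preimage hdiff.continuous
  obtain ⟨xm, hxm, hdist⟩ := hS.exists_infDist_eq_dist ⟨xstar, rfl⟩ x
  refine ⟨xm, fun y => hxm ▸ hmin y, ?_⟩
  have hgrowth := infDist_mul_le_sqrt_of_pl hα hdiff hmin hPL' x
  rw [hdist] at hgrowth
  calc α / 2 * ‖x - xm‖ ^ 2 = (dist x xm * √(α / 2)) ^ 2 := by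
        rw [mul_pow, Real.sq_sqrt (by positivity), dist_eq_norm]; ring
    _ ≤ √(f x - f xstar) ^ 2 := pow_le_pow_left₀ (by positivity) hgrowth 2
    _ = f x - f xstar := Real.sq_sqrt (sub_nonneg.2 (hmin x))
end

section
/- Let Q_δ be the coin-flip quantizer applied independently to each coordinate of v ∈ ℝⁿ: Q_δ(v_i) equals δ⌊v_i/δ⌋ with probability 1 - {v_i/δ} and δ(⌊v_i/δ⌋+1) otherwise. Then the expected number of nonzero coordinates satisfies E[‖Q_δ(v)‖₀] ≤ ‖v‖₁/δ. -/
lemma coinFlip_term_le (x : ℝ) :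
    (1 - Int.fract x) * (if ((⌊x⌋ : ℤ) : ℝ) = 0 then 0 else 1)
      + Int.fract x * (if (((⌊x⌋ : ℤ) : ℝ) + 1) = 0 then 0 else 1) ≤ |x| := by
  have hfr : Int.fract x = x - ⌊x⌋ := rfl
  by_cases hk0 : ⌊x⌋ = 0
  · have hx : Int.fract x = x := by rw [hfr, hk0]; simp
    simp only [hk0]
    norm_num
    rw [hx]
    exact le_abs_self x
  · by_cases hk1 : ⌊x⌋ = -1
    · simp only [hk1]
      norm_num
      rw [hfr, hk1]
      push_cast
      have := neg_le_abs x
      linarith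
    · have h1 : ((⌊x⌋ : ℤ) : ℝ) ≠ 0 := by exact_mod_cast hk0
      have h2 : (((⌊x⌋ : ℤ) : ℝ) + 1) ≠ 0 := by
        intro h
        apply hk1
        have : ((⌊x⌋ : ℤ) : ℝ) = ((-1 : ℤ) : ℝ) := by push_cast; linarith
        exact_mod_cast this
      simp only [h1, h2, if_neg, if_false]
      have hone : (1 - Int.fract x) * 1 + Int.fract x * 1 = 1 := by ring
      rw [hone]
      have hle := Int.floor_le x
      have hlt := Int.lt_floor_add_one x
      rcases lt_or_gt_of_ne hk0 with h | h
      · have : ⌊x⌋ ≤ -2 := by omega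
        have : ((⌊x⌋ : ℤ) : ℝ) ≤ -2 := by exact_mod_cast this
        have := neg_le_abs x
        linarith
      · have : (1 : ℤ) ≤ ⌊x⌋ := h
        have : (1 : ℝ) ≤ ((⌊x⌋ : ℤ) : ℝ) := by exact_mod_cast this
        have := le_abs_self x
        linarith

/-- Sparsity of the coin-flip quantizer applied independently to each coordinate:
the expected number of nonzero coordinates is at most `‖v‖₁/δ`. The expected count is
`∑ i, ((1 - {v_i/δ})·1[δ⌊v_i/δ⌋ ≠ 0] + {v_i/δ}·1[δ(⌊v_i/δ⌋+1) ≠ 0])`. -/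
theorem coinFlipQuant_sparsity (n : ℕ) (δ : ℝ) (hδ : 0 < δ) (v : Fin n → ℝ) :
    (∑ i, ((1 - Int.fract (v i / δ)) * (if δ * ((⌊v i / δ⌋ : ℤ) : ℝ) = 0 then 0 else 1)
        + Int.fract (v i / δ) * (if δ * (((⌊v i / δ⌋ : ℤ) : ℝ) + 1) = 0 then 0 else 1)))
      ≤ (∑ i, |v i|) / δ := by
  rw [Finset.sum_div]
  apply Finset.sum_le_sum
  intro i _
  have hδ' : δ ≠ 0 := hδ.ne'
  have e1 : (δ * ((⌊v i / δ⌋ : ℤ) : ℝ) = 0) ↔ (((⌊v i / δ⌋ : ℤ) : ℝ) = 0) := by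
    simp [mul_eq_zero, hδ']
  have e2 : (δ * (((⌊v i / δ⌋ : ℤ) : ℝ) + 1) = 0) ↔ ((((⌊v i / δ⌋ : ℤ) : ℝ) + 1) = 0) := by
    simp [mul_eq_zero, hδ']
  have habs : |v i| / δ = |v i / δ| := by
    rw [abs_div, abs_of_pos hδ]
  rw [habs]
  simp only [e1, e2]
  exact coinFlip_term_le (v i / δ)
end
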